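/- If M satisfies the base axioms, then base-k digits are unique: for every x ∈ M with x > 0, every d ∈ M, and all a, a' ∈ {0,…,k−1}, if (x)_d = a and (x)_d = a' then a = a'. -/

import Mathlib

/-- The base axioms for a Büchi-arithmetic-like structure `M` with distinguished
element `one` and function `V`, over the base `k`. -/
structure BuchiAxioms (k : ℕ) (M : Type*) [AddCancelCommMonoid M] [LinearOrder M]
    (one : M) (V : M → M) : Prop where
  transl : ∀ x y z : M, x ≤ y ↔ x + z ≤ y + z
  one_pos : (0 : M) < one
  discrete : ∀ x y : M, x < y → x + one ≤ y
  ord0 : ∀ x : M, 0 ≤ x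
  ord1 : ∀ x y : M, x ≤ y ↔ ∃ z ≤ y, z + x = y
  mod : ∀ x : M, ∃ a : ℕ, a < k ∧ ∃ z : M, x = a • one + k • z ∨ a • one = x + k • z
  v0 : V 0 = 0 ∧ V one = one
  v1 : (∀ x : M, V (k • x) = k • V x) ∧
    ∀ (d : M) (a : ℕ), (0 < d ∧ V d = d) → 1 ≤ a → a < k → V (a • d) = d
  v2 : ∀ x y : M, 0 < x → 0 < y → V x < V y → V (x + y) = V x
  v3 : ∀ x : M, 0 < x → ∃ y ≤ x, ∃ a : ℕ, 1 ≤ a ∧ a < k ∧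
    x = y + a • V x ∧ (V x < V y ∨ y = 0)
  v4 : ∀ x : M, 0 < x → ∃ d : M, (0 < d ∧ V d = d) ∧ d ≤ x ∧ x < k • d
  v5 : ∀ x : M, V (V x) = V x

/-- `(x)_d = a` : the digit of `x` at position `d` (a power of `k`) equals `a`. -/
def DigitEq {M : Type*} [AddCancelCommMonoid M] [LinearOrder M]
    (V : M → M) (x d : M) (a : ℕ) : Prop :=
  (0 < d ∧ V d = d) ∧ ∃ y < d, ∃ z ≤ x, x = y + a • d + z ∧ (z = 0 ∨ d < V z)

/-!
Subtracting two representations `x = y + a • d + z = y' + a' • d + z'` with `a < a'` leaves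
`y + z = y' + b • d + z'` with `1 ≤ b < k`. Call `z` a tail if `z = 0` or `d < V z`. Since no
fixed point of `V` lies strictly between `d` and `k • d`, a nonzero tail is at least `k • d`, and
by the ultrametric axiom (V2) the difference of two tails is again a tail. If `z ≤ z'` this forces
`d ≤ y`; otherwise `z - z'` is a nonzero tail below `y' + b • d < k • d`.
-/

theorem add_nsmul_lt_nsmul {M : Type*} [AddCommMonoid M] [PartialOrder M]
    [IsOrderedCancelAddMonoid M] [CanonicallyOrderedAdd M] {y d : M} {b k : ℕ}
    (hy : y < d) (hb : b < k) : y + b • d < k • d :=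
  calc y + b • d < d + b • d := add_lt_add_left hy _
    _ = (b + 1) • d := by rw [succ_nsmul, add_comm]
    _ ≤ k • d := nsmul_le_nsmul_left zero_le hb

namespace BuchiAxioms

variable {k : ℕ} {M : Type*} [AddCancelCommMonoid M] [LinearOrder M] {one : M} {V : M → M}

theorem isOrderedCancelAddMonoid (H : BuchiAxioms k M one V) : IsOrderedCancelAddMonoid M where
  add_le_add_left a b h c := (H.transl a b c).1 h
  le_of_add_le_add_left a b c h := (H.transl b c a).2 (by rwa [add_comm b, add_comm c])

theorem canonicallyOrderedAdd (H : BuchiAxioms k M one V) : CanonicallyOrderedAdd M where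
  exists_add_of_le h :=
    let ⟨c, _, hc⟩ := (H.ord1 _ _).1 h
    ⟨c, by rw [← hc, add_comm]⟩
  le_add_self a b := by simpa using (H.transl 0 b a).1 (H.ord0 b)
  le_self_add a b := by simpa [add_comm a] using (H.transl 0 b a).1 (H.ord0 b)

variable [CanonicallyOrderedAdd M]

theorem V_le_self (H : BuchiAxioms k M one V) {z : M} (hz : 0 < z) : V z ≤ z := by
  obtain ⟨y, -, a, ha, -, hz_eq, -⟩ := H.v3 z hz
  calc V z ≤ a • V z := by simpa using nsmul_le_nsmul_left (zero_le : 0 ≤ V z) ha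
    _ ≤ y + a • V z := le_add_self
    _ = z := hz_eq.symm

theorem pos_of_lt_V (H : BuchiAxioms k M one V) {d z : M} (h : d < V z) : 0 < z := by
  refine pos_of_ne_zero ?_
  rintro rfl
  rw [H.v0.1] at h
  exact not_lt_zero h

theorem V_add_eq_of_lt_V (H : BuchiAxioms k M one V) {y c : M} (hc : 0 < c)
    (hy : V c < V y ∨ y = 0) : V (y + c) = V c := by
  rcases hy with hy | rfl
  · rw [add_comm]
    exact H.v2 c y hc (H.pos_of_lt_V hy) hy
  · rw [zero_add]

theorem nsmul_le_of_lt_of_V_eq (H : BuchiAxioms k M one V) {d e : M} (hd : 0 < d ∧ V d = d)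
    (he : V e = e) (hlt : d < e) : k • d ≤ e := by
  -- With `e = d + r`, (V2) forces `V r = d`, so (V3) gives `e = y + (a + 1) • d`; were
  -- `a + 1 < k`, then (V1) and (V2) would give `V e = d`.
  obtain ⟨r, rfl⟩ := exists_add_of_le hlt.le
  have hr : 0 < r := pos_of_ne_zero (by rintro rfl; simp at hlt)
  have hVr : V r = d := by
    rcases lt_trichotomy (V r) d with h | h | h
    · have hVe := H.v2 r d hr hd.1 (hd.2.symm ▸ h)
      rw [add_comm, he] at hVe
      rw [hVe] at hlt
      exact absurd (hlt.trans h) (lt_irrefl d)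
    · exact h
    · have hVe := H.v2 d r hd.1 hr (hd.2.symm ▸ h)
      rw [he, hd.2] at hVe
      exact absurd hVe hlt.ne'
  obtain ⟨y, -, a, ha, hak, hr_eq, hy⟩ := H.v3 r hr
  rw [hVr] at hr_eq hy
  have he_eq : d + r = y + (a + 1) • d := by rw [hr_eq, succ_nsmul]; abel
  rcases (Nat.succ_le_of_lt hak).eq_or_lt with hk | hk
  · rw [he_eq, ← hk]
    exact le_add_self
  · have hVad : V ((a + 1) • d) = d := H.v1.2 d (a + 1) hd (by omega) hk
    have hVe := H.V_add_eq_of_lt_V (nsmul_pos hd.1 (by omega)) (hVad.symm ▸ hy)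
    rw [← he_eq, he, hVad] at hVe
    exact absurd hVe hlt.ne'

theorem nsmul_le_of_lt_V (H : BuchiAxioms k M one V) {d z : M} (hd : 0 < d ∧ V d = d)
    (h : d < V z) : k • d ≤ z :=
  (H.nsmul_le_of_lt_of_V_eq hd (H.v5 z) h).trans (H.V_le_self (H.pos_of_lt_V h))

theorem lt_V_of_eq_add (H : BuchiAxioms k M one V) {d z z' w : M} (hz : z = 0 ∨ d < V z)
    (hz' : z' = 0 ∨ d < V z') (hw : 0 < w) (h : z = z' + w) : d < V w := by
  by_contra! hwd
  have hz_pos : 0 < z := h ▸ hw.trans_le le_add_self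
  have hVz : V z = V w := h ▸ H.V_add_eq_of_lt_V hw (hz'.symm.imp_left hwd.trans_lt)
  exact (hz.resolve_left hz_pos.ne').not_ge (hVz ▸ hwd)

theorem not_digitEq_of_lt [IsOrderedCancelAddMonoid M] (H : BuchiAxioms k M one V) {x d : M}
    {a a' : ℕ} (hlt : a < a') (ha' : a' < k) (h : DigitEq V x d a) (h' : DigitEq V x d a') :
    False := by
  obtain ⟨hd, y, hy, z, -, rfl, hz⟩ := h
  obtain ⟨-, y', hy', z', -, hx, hz'⟩ := h'
  obtain ⟨b, rfl⟩ := Nat.exists_eq_add_of_lt hlt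
  have hsum : y + z = y' + (b + 1) • d + z' :=
    add_left_cancel (a := a • d) <| by
      rw [add_assoc a b, add_nsmul] at hx
      convert hx using 1 <;> abel
  have hd_le : d ≤ y' + (b + 1) • d :=
    calc d = 1 • d := (one_nsmul d).symm
      _ ≤ (b + 1) • d := nsmul_le_nsmul_left zero_le (by omega)
      _ ≤ y' + (b + 1) • d := le_add_self
  rcases le_or_gt z z' with hzz | hzz
  · obtain ⟨w, rfl⟩ := exists_add_of_le hzz
    have hy_eq : y = y' + (b + 1) • d + w := add_right_cancel (b := z) (by rw [hsum]; abel)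
    exact hy.not_ge (hd_le.trans (hy_eq ▸ le_self_add))
  · obtain ⟨w, rfl⟩ := exists_add_of_le hzz.le
    have hw : 0 < w := pos_of_ne_zero (by rintro rfl; simp at hzz)
    have hy_eq : y + w = y' + (b + 1) • d := add_right_cancel (b := z') (by rw [← hsum]; abel)
    have hkw := H.nsmul_le_of_lt_V hd (H.lt_V_of_eq_add hz hz' hw rfl)
    exact (add_nsmul_lt_nsmul hy' (by omega : b + 1 < k)).not_ge (hy_eq ▸ hkw.trans le_add_self)

end BuchiAxioms

theorem stmt5 (k : ℕ) (M : Type*) [AddCancelCommMonoid M] [LinearOrder M]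
    (one : M) (V : M → M) (H : BuchiAxioms k M one V) :
    ∀ x : M, 0 < x → ∀ d : M, ∀ a a' : ℕ, a < k → a' < k →
      DigitEq V x d a → DigitEq V x d a' → a = a' := by
  have := H.isOrderedCancelAddMonoid
  have := H.canonicallyOrderedAdd
  intro x _ d a a' ha ha' h h'
  by_contra hne
  rcases Nat.lt_or_gt_of_ne hne with hlt | hlt
  · exact H.not_digitEq_of_lt hlt ha' h h'
  · exact H.not_digitEq_of_lt hlt ha h' h
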